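/- arXiv:1608.02359 — 2 statements merged into one kernel-verified Lean document; each statement's English description precedes it below -/
import Mathlib

section
/- For every g ∈ L²(ℝ), b > 0, and f ∈ L²(ℝ), one has ⟨f, R f⟩ ≥ 0, where R is the integral operator with kernel -(1/(2πi)) conj(g(θ)) g(θ')/(θ'-θ+ib). Consequently R is a positive operator. -/
open MeasureTheory Complex Set
open scoped InnerProductSpace

lemma expIntOn (c : ℂ) (hc : c.re < 0) :
    IntegrableOn (fun η : ℝ => Complex.exp (c * η)) (Ioi 0) := by
  have hb : (0:ℝ) < -c.re := by linarith
  refine (exp_neg_integrableOn_Ioi 0 hb).mono' ?_ ?_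
  · exact (Complex.continuous_exp.comp (continuous_const.mul Complex.continuous_ofReal)).aestronglyMeasurable
  · filter_upwards with η
    simp only [Complex.norm_exp]
    have : (c * (η:ℂ)).re = c.re * η := by simp
    rw [this]
    simp

lemma expIoi (c : ℂ) (hc : c.re < 0) :
    ∫ η : ℝ in Ioi 0, Complex.exp (c * η) = -c⁻¹ := by
  have hc0 : c ≠ 0 := fun h => by simp [h] at hc
  have hd : ∀ x ∈ Ici (0:ℝ), HasDerivAt (fun η : ℝ => Complex.exp (c * η) / c)
      (Complex.exp (c * x)) x := by
    intro x _
    have h1 : HasDerivAt (fun η : ℝ => Complex.exp (c * η)) (Complex.exp (c * x) * c) x := by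
      have := (Complex.hasDerivAt_exp (c * x)).comp x
        (((hasDerivAt_id (x:ℂ)).const_mul c).comp_ofReal)
      simpa [mul_comm, Function.comp_def] using this
    simpa [mul_div_cancel_right₀ _ hc0] using h1.div_const c
  have ht : Filter.Tendsto (fun η : ℝ => Complex.exp (c * η) / c) Filter.atTop (nhds 0) := by
    rw [show (0:ℂ) = 0 / c by simp]
    apply Filter.Tendsto.div_const
    rw [tendsto_zero_iff_norm_tendsto_zero]
    have : ∀ η : ℝ, ‖Complex.exp (c * η)‖ = Real.exp (c.re * η) := by
      intro η; simp [Complex.norm_exp]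
    simp_rw [this]
    exact Real.tendsto_exp_atBot.comp (Filter.Tendsto.const_mul_atTop_of_neg hc Filter.tendsto_id)
  have := integral_Ioi_of_hasDerivAt_of_tendsto' hd (expIntOn c hc) ht
  simpa [neg_div, div_eq_mul_inv] using this

lemma denom_ne (b : ℝ) (hb : 0 < b) (x : ℝ) : (x:ℂ) + Complex.I * b ≠ 0 := by
  intro h
  have := congrArg Complex.im h
  simp at this
  exact hb.ne' this

lemma denom_ne' (b : ℝ) (hb : 0 < b) (x : ℝ) : Complex.I * x - (b:ℂ) ≠ 0 := by
  intro h
  have := congrArg Complex.re h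
  simp at this
  exact hb.ne' this

lemma kernelEq (b : ℝ) (hb : 0 < b) (x : ℝ) :
    (-(1:ℂ) / (2 * (Real.pi:ℂ) * Complex.I)) / ((x:ℂ) + Complex.I * b)
      = ∫ η : ℝ in Ioi 0, ((2 * Real.pi : ℝ)⁻¹ : ℂ) * Complex.exp ((Complex.I * x - b) * η) := by
  have hc : (Complex.I * (x:ℂ) - (b:ℂ)).re < 0 := by simpa using hb
  rw [integral_const_mul, expIoi _ hc]
  have h1 := denom_ne b hb x
  have h2 := denom_ne' b hb x
  have hpi : ((Real.pi:ℂ)) ≠ 0 := by exact_mod_cast Real.pi_ne_zero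
  have hI := Complex.I_ne_zero
  push_cast
  field_simp
  ring_nf
  rw [Complex.I_sq]
  ring

lemma key (g f : Lp ℂ 2 (volume : Measure ℝ)) (b : ℝ) (hb : 0 < b) :
    0 ≤ (∫ θ : ℝ, (starRingEnd ℂ) ((f : ℝ → ℂ) θ) *
        ∫ θ' : ℝ, (-(1 : ℂ) / (2 * (Real.pi : ℂ) * Complex.I)) *
          (starRingEnd ℂ) ((g : ℝ → ℂ) θ) * (g : ℝ → ℂ) θ' /
            ((θ' : ℂ) - (θ : ℂ) + Complex.I * (b : ℂ)) * (f : ℝ → ℂ) θ').re ∧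
    (∫ θ : ℝ, (starRingEnd ℂ) ((f : ℝ → ℂ) θ) *
        ∫ θ' : ℝ, (-(1 : ℂ) / (2 * (Real.pi : ℂ) * Complex.I)) *
          (starRingEnd ℂ) ((g : ℝ → ℂ) θ) * (g : ℝ → ℂ) θ' /
            ((θ' : ℂ) - (θ : ℂ) + Complex.I * (b : ℂ)) * (f : ℝ → ℂ) θ').im = 0 := by
  set c : ℂ := -(1:ℂ) / (2 * (Real.pi:ℂ) * Complex.I) with hc
  set h : ℝ → ℂ := fun θ => (g : ℝ → ℂ) θ * (f : ℝ → ℂ) θ with hh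
  have hmeas : AEStronglyMeasurable h volume :=
    (Lp.aestronglyMeasurable g).mul (Lp.aestronglyMeasurable f)
  have hip : Integrable (fun x => (starRingEnd ℂ) ((g : ℝ → ℂ) x) * (f : ℝ → ℂ) x) volume := by
    have := L2.integrable_inner (𝕜 := ℂ) g f
    simpa [RCLike.inner_apply, mul_comm] using this
  have hInt : Integrable h volume := by
    refine hip.norm.mono' hmeas ?_
    filter_upwards with x
    simp [hh, norm_mul]
  -- the kernel as a function on pairs
  set A : ℝ × ℝ → ℂ := fun z =>
    (starRingEnd ℂ) (h z.1) * h z.2 * (c / ((z.2:ℂ) - z.1 + Complex.I * b)) with hA_def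
  have hdne : ∀ z : ℝ × ℝ, ((z.2:ℂ) - z.1 + Complex.I * b) ≠ 0 := by
    intro z
    have := denom_ne b hb (z.2 - z.1)
    push_cast at this
    exact this
  have hAmeas : AEStronglyMeasurable A (volume.prod volume) := by
    have h1 : AEStronglyMeasurable (fun z : ℝ × ℝ => (starRingEnd ℂ) (h z.1))
        (volume.prod volume) :=
      Complex.continuous_conj.comp_aestronglyMeasurable hmeas.comp_fst
    have h2 : AEStronglyMeasurable (fun z : ℝ × ℝ => h z.2) (volume.prod volume) := hmeas.comp_snd
    have h3 : Continuous (fun z : ℝ × ℝ => c / ((z.2:ℂ) - z.1 + Complex.I * b)) := by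
      apply continuous_const.div (by fun_prop) hdne
    exact (h1.mul h2).mul h3.aestronglyMeasurable
  have hA : Integrable A (volume.prod volume) := by
    refine ((hInt.norm.mul_prod hInt.norm).mul_const (‖c‖ / b)).mono' hAmeas ?_
    filter_upwards with z
    have hble : b ≤ ‖(z.2:ℂ) - z.1 + Complex.I * b‖ := by
      have := Complex.abs_im_le_norm ((z.2:ℂ) - z.1 + Complex.I * b)
      rw [show ((z.2:ℂ) - z.1 + Complex.I * b).im = b by simp, abs_of_pos hb] at this
      exact this
    have : ‖c / ((z.2:ℂ) - z.1 + Complex.I * b)‖ ≤ ‖c‖ / b := by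
      rw [norm_div]
      gcongr
    calc ‖A z‖ = ‖h z.1‖ * ‖h z.2‖ * ‖c / ((z.2:ℂ) - z.1 + Complex.I * b)‖ := by
          simp [hA_def, norm_mul]
      _ ≤ ‖h z.1‖ * ‖h z.2‖ * (‖c‖ / b) := by
          gcongr
  -- kernel as integral over η
  set P : ℝ × ℝ → ℝ → ℂ := fun z η =>
    (starRingEnd ℂ) (h z.1) * h z.2 *
      (((2 * Real.pi : ℝ)⁻¹ : ℂ) *
        Complex.exp ((Complex.I * ((z.2:ℂ) - z.1) - b) * η)) with hP_def
  have hAP : ∀ z : ℝ × ℝ, A z = ∫ η : ℝ in Ioi 0, P z η := by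
    intro z
    have hk := kernelEq b hb (z.2 - z.1)
    rw [Complex.ofReal_sub] at hk
    rw [hA_def]
    simp only [hc]
    rw [hk, ← integral_const_mul]
  have hPmeas : AEStronglyMeasurable (Function.uncurry P)
      ((volume.prod volume).prod (volume.restrict (Ioi 0))) := by
    have h1 : AEStronglyMeasurable (fun w : (ℝ × ℝ) × ℝ => (starRingEnd ℂ) (h w.1.1))
        ((volume.prod volume).prod (volume.restrict (Ioi 0))) :=
      Complex.continuous_conj.comp_aestronglyMeasurable hmeas.comp_fst.comp_fst
    have h2 : AEStronglyMeasurable (fun w : (ℝ × ℝ) × ℝ => h w.1.2)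
        ((volume.prod volume).prod (volume.restrict (Ioi 0))) := hmeas.comp_snd.comp_fst
    have h3 : Continuous (fun w : (ℝ × ℝ) × ℝ =>
        ((2 * Real.pi : ℝ)⁻¹ : ℂ) *
          Complex.exp ((Complex.I * ((w.1.2:ℂ) - w.1.1) - b) * w.2)) := by fun_prop
    exact (h1.mul h2).mul h3.aestronglyMeasurable
  have hre : ∀ x y η : ℝ, ((Complex.I * ((x:ℂ) - y) - b) * η).re = -b * η := by
    intro x y η
    simp [Complex.mul_re]
  have hexp : Integrable (fun η : ℝ => (2 * Real.pi)⁻¹ * Real.exp (-b * η))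
      (volume.restrict (Ioi 0)) := (exp_neg_integrableOn_Ioi 0 hb).const_mul _
  have hP : Integrable (Function.uncurry P)
      ((volume.prod volume).prod (volume.restrict (Ioi 0))) := by
    refine ((hInt.norm.mul_prod hInt.norm).mul_prod hexp).mono' hPmeas ?_
    filter_upwards with w
    have : ‖Function.uncurry P w‖ =
        ‖h w.1.1‖ * ‖h w.1.2‖ * ((2 * Real.pi)⁻¹ * Real.exp (-b * w.2)) := by
      simp only [Function.uncurry, hP_def, norm_mul, Complex.norm_conj,
        Complex.norm_exp, hre, norm_inv, Complex.norm_real, Real.norm_eq_abs,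
        _root_.abs_of_nonneg (by positivity : (0:ℝ) ≤ 2 * Real.pi), abs_two,
        _root_.abs_of_pos Real.pi_pos]
    rw [this]
  -- the Fourier transform of h
  set F : ℝ → ℂ := fun η => ∫ θ : ℝ, h θ * Complex.exp (Complex.I * η * θ) with hF_def
  have hQeq : ∀ η : ℝ, (∫ z, P z η ∂(volume.prod volume)) =
      (((2 * Real.pi)⁻¹ * Real.exp (-b * η) : ℝ) : ℂ) * ((starRingEnd ℂ) (F η) * F η) := by
    intro η
    have h1 : ∀ z : ℝ × ℝ, P z η =
        (((2 * Real.pi)⁻¹ * Real.exp (-b * η) : ℝ) : ℂ) *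
          ((starRingEnd ℂ) (h z.1 * Complex.exp (Complex.I * η * z.1)) *
            (h z.2 * Complex.exp (Complex.I * η * z.2))) := by
      intro z
      have hsplit : Complex.exp ((Complex.I * ((z.2:ℂ) - z.1) - b) * η) =
          Complex.exp (-(Complex.I * η * z.1)) * Complex.exp (Complex.I * η * z.2) *
            Complex.exp (-((b:ℂ) * η)) := by
        rw [← Complex.exp_add, ← Complex.exp_add]
        ring_nf
      have hconjexp : (starRingEnd ℂ) (Complex.exp (Complex.I * η * z.1)) =
          Complex.exp (-(Complex.I * η * z.1)) := by
        rw [← Complex.exp_conj]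
        congr 1
        simp
      have hofreal : Complex.exp (-((b:ℂ) * η)) = ((Real.exp (-b * η) : ℝ) : ℂ) := by
        rw [Complex.ofReal_exp]
        push_cast
        ring_nf
      simp only [hP_def, hsplit, map_mul, hconjexp, hofreal]
      push_cast
      ring
    calc (∫ z, P z η ∂(volume.prod volume)) =
        ∫ z : ℝ × ℝ, (((2 * Real.pi)⁻¹ * Real.exp (-b * η) : ℝ) : ℂ) *
          ((starRingEnd ℂ) (h z.1 * Complex.exp (Complex.I * η * z.1)) *
            (h z.2 * Complex.exp (Complex.I * η * z.2))) ∂(volume.prod volume) := by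
          simp only [h1]
      _ = (((2 * Real.pi)⁻¹ * Real.exp (-b * η) : ℝ) : ℂ) *
          ∫ z : ℝ × ℝ, ((starRingEnd ℂ) (h z.1 * Complex.exp (Complex.I * η * z.1)) *
            (h z.2 * Complex.exp (Complex.I * η * z.2))) ∂(volume.prod volume) :=
          integral_const_mul _ _
      _ = (((2 * Real.pi)⁻¹ * Real.exp (-b * η) : ℝ) : ℂ) *
          ((∫ θ : ℝ, (starRingEnd ℂ) (h θ * Complex.exp (Complex.I * η * θ))) *
            (∫ θ : ℝ, h θ * Complex.exp (Complex.I * η * θ))) := by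
          congr 1
          exact integral_prod_mul (fun θ : ℝ => (starRingEnd ℂ) (h θ * Complex.exp (Complex.I * η * θ)))
            (fun θ : ℝ => h θ * Complex.exp (Complex.I * η * θ))
      _ = _ := by rw [integral_conj, hF_def]
  have hmain : (∫ θ : ℝ, (starRingEnd ℂ) ((f : ℝ → ℂ) θ) *
        ∫ θ' : ℝ, c * (starRingEnd ℂ) ((g : ℝ → ℂ) θ) * (g : ℝ → ℂ) θ' /
            ((θ' : ℂ) - (θ : ℂ) + Complex.I * (b : ℂ)) * (f : ℝ → ℂ) θ') =
      ∫ η : ℝ in Ioi 0, ∫ z, P z η ∂(volume.prod volume) := by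
    calc (∫ θ : ℝ, (starRingEnd ℂ) ((f : ℝ → ℂ) θ) *
        ∫ θ' : ℝ, c * (starRingEnd ℂ) ((g : ℝ → ℂ) θ) * (g : ℝ → ℂ) θ' /
            ((θ' : ℂ) - (θ : ℂ) + Complex.I * (b : ℂ)) * (f : ℝ → ℂ) θ') =
        ∫ θ : ℝ, ∫ θ' : ℝ, A (θ, θ') := by
          congr 1
          funext θ
          rw [← integral_const_mul]
          congr 1
          funext θ'
          rw [hA_def]
          simp only [hh, map_mul]
          ring
      _ = ∫ z, A z ∂(volume.prod volume) := (integral_prod A hA).symm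
      _ = ∫ z, (∫ η : ℝ in Ioi 0, P z η) ∂(volume.prod volume) := by simp only [hAP]
      _ = ∫ η : ℝ in Ioi 0, ∫ z, P z η ∂(volume.prod volume) := integral_integral_swap hP
  have hreal : (∫ η : ℝ in Ioi 0, ∫ z, P z η ∂(volume.prod volume)) =
      ((∫ η : ℝ in Ioi 0, ((2 * Real.pi)⁻¹ * Real.exp (-b * η)) * Complex.normSq (F η) : ℝ) : ℂ) := by
    refine (integral_congr_ae (Filter.Eventually.of_forall fun η => ?_)).trans
      (integral_ofReal (𝕜 := ℂ))
    rw [hQeq η, ← Complex.normSq_eq_conj_mul_self, ← Complex.ofReal_mul]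
    norm_cast
  rw [hmain, hreal]
  constructor
  · simp only [Complex.ofReal_re]
    apply integral_nonneg
    intro η
    have : (0:ℝ) ≤ ((2 * Real.pi)⁻¹ * Real.exp (-b * η)) * Complex.normSq (F η) :=
      mul_nonneg (by positivity) (Complex.normSq_nonneg _)
    simpa using this
  · simp only [Complex.ofReal_im]

/-- For every `g ∈ L²(ℝ)`, `b > 0` and `f ∈ L²(ℝ)`, one has `⟨f, R f⟩ ≥ 0`,
where `R` is the integral operator with kernel `-(1/(2πi)) conj(g(θ)) g(θ')/(θ'-θ+ib)`.
Consequently `R` is a positive operator. -/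
theorem stmt2
    (g : Lp ℂ 2 (volume : Measure ℝ)) (b : ℝ) (hb : 0 < b)
    (R : Lp ℂ 2 (volume : Measure ℝ) →L[ℂ] Lp ℂ 2 (volume : Measure ℝ))
    (hR : ∀ f : Lp ℂ 2 (volume : Measure ℝ), ∀ᵐ θ ∂(volume : Measure ℝ),
      (R f : ℝ → ℂ) θ =
        ∫ θ' : ℝ, (-(1 : ℂ) / (2 * (Real.pi : ℂ) * Complex.I)) *
          (starRingEnd ℂ) ((g : ℝ → ℂ) θ) * (g : ℝ → ℂ) θ' /
            ((θ' : ℂ) - (θ : ℂ) + Complex.I * (b : ℂ)) * (f : ℝ → ℂ) θ') :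
    (∀ f : Lp ℂ 2 (volume : Measure ℝ),
        0 ≤ (⟪f, R f⟫_ℂ : ℂ).re ∧ (⟪f, R f⟫_ℂ : ℂ).im = 0) ∧
      R.IsPositive := by
  have hkey : ∀ f : Lp ℂ 2 (volume : Measure ℝ),
      0 ≤ (⟪f, R f⟫_ℂ : ℂ).re ∧ (⟪f, R f⟫_ℂ : ℂ).im = 0 := by
    intro f
    have hinner : (⟪f, R f⟫_ℂ : ℂ) =
        ∫ θ : ℝ, (starRingEnd ℂ) ((f : ℝ → ℂ) θ) * (R f : ℝ → ℂ) θ := by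
      rw [MeasureTheory.L2.inner_def]
      simp [RCLike.inner_apply, mul_comm]
    have hcong : (∫ θ : ℝ, (starRingEnd ℂ) ((f : ℝ → ℂ) θ) * (R f : ℝ → ℂ) θ) =
        ∫ θ : ℝ, (starRingEnd ℂ) ((f : ℝ → ℂ) θ) *
          ∫ θ' : ℝ, (-(1 : ℂ) / (2 * (Real.pi : ℂ) * Complex.I)) *
            (starRingEnd ℂ) ((g : ℝ → ℂ) θ) * (g : ℝ → ℂ) θ' /
              ((θ' : ℂ) - (θ : ℂ) + Complex.I * (b : ℂ)) * (f : ℝ → ℂ) θ' := by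
      refine integral_congr_ae ?_
      filter_upwards [hR f] with θ hθ
      rw [hθ]
    rw [hinner, hcong]
    exact key g f b hb
  refine ⟨hkey, ?_⟩
  rw [ContinuousLinearMap.isPositive_iff_complex]
  intro x
  obtain ⟨h1, h2⟩ := hkey x
  have hconj : (⟪R x, x⟫_ℂ : ℂ) = ⟪x, R x⟫_ℂ := by
    rw [← inner_conj_symm]
    exact Complex.conj_eq_iff_im.mpr h2
  constructor
  · rw [hconj]
    simpa [RCLike.re_to_complex] using Complex.conj_eq_iff_re.mp (Complex.conj_eq_iff_im.mpr h2)
  · rw [hconj]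
    simpa [RCLike.re_to_complex] using h1
end

section
/- For 0 ≤ k ≤ n, the number of partial pairings between a set of k left points and a set of n-k right points that pair exactly j left points with j right points is (k choose j)(n-k choose j) j!, and the weighted sum ∑_{j=0}^{min(k,n-k)} (k choose j)(n-k choose j) j! · √((k-j)!) · √((n-k-j)!) is at most 2^n √(n!). -/
/-!
With `k` left and `m` right points, a partial matching of size `j` is the graph of an injection
from a `j`-element set of left points into the right points, which gives the count
`C(k,j) · m!/(m-j)! = C(k,j) C(m,j) j!`. For the weighted sum,
`j!² (k-j)! (m-j)! ≤ k! m! ≤ (k+m)!` bounds each factor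
`j! √((k-j)!) √((m-j)!)` by `√((k+m)!)`, and the remaining `∑ C(k,j) C(m,j)` is at most
`2^k · 2^m`, since `C(m,j) ≤ 2^m`.
-/

open Finset Nat

namespace Finset

variable {α β : Type*}

def IsPartialMatching (p : Finset (α × β)) : Prop :=
  ∀ a ∈ p, ∀ b ∈ p, a ≠ b → a.1 ≠ b.1 ∧ a.2 ≠ b.2

theorem isPartialMatching_iff {p : Finset (α × β)} :
    p.IsPartialMatching ↔
      Set.InjOn Prod.fst (p : Set (α × β)) ∧ Set.InjOn Prod.snd (p : Set (α × β)) := by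
  refine ⟨fun h => ⟨?_, ?_⟩, fun ⟨h₁, h₂⟩ a ha b hb hne => ⟨?_, ?_⟩⟩
  · intro a ha b hb hab
    by_contra hne
    exact (h a ha b hb hne).1 hab
  · intro a ha b hb hab
    by_contra hne
    exact (h a ha b hb hne).2 hab
  · exact fun hab => hne (h₁ ha hb hab)
  · exact fun hab => hne (h₂ ha hb hab)

def injGraph {s : Finset α} (f : s ↪ β) : Finset (α × β) :=
  (univ : Finset s).map
    ⟨fun a : s => ((a : α), f a), fun _ _ h => Subtype.ext (congrArg Prod.fst h)⟩

variable {s : Finset α} (f : s ↪ β)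

theorem mem_injGraph {x : α × β} : x ∈ injGraph f ↔ ∃ a : s, ((a : α), f a) = x := by
  simp only [injGraph, mem_map, mem_univ, true_and]
  rfl

@[simp]
theorem card_injGraph : (injGraph f).card = s.card := by
  simp [injGraph]

theorem image_fst_injGraph [DecidableEq α] : (injGraph f).image Prod.fst = s := by
  ext a
  simp only [mem_image, mem_injGraph]
  constructor
  · rintro ⟨_, ⟨b, rfl⟩, rfl⟩
    exact b.2
  · exact fun ha => ⟨_, ⟨⟨a, ha⟩, rfl⟩, rfl⟩

theorem isPartialMatching_injGraph : (injGraph f).IsPartialMatching := by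
  rintro _ ha _ hb hne
  obtain ⟨a, rfl⟩ := (mem_injGraph f).1 ha
  obtain ⟨b, rfl⟩ := (mem_injGraph f).1 hb
  have hab : a ≠ b := by rintro rfl; exact hne rfl
  exact ⟨fun h => hab (Subtype.ext h), fun h => hab (f.injective h)⟩

variable (α β) in
def injGraphSigma (j : ℕ) :
    (Σ s : {s : Finset α // s.card = j}, ((s : Finset α) ↪ β)) →
      {p : Finset (α × β) // p.card = j ∧ p.IsPartialMatching} :=
  fun x => ⟨injGraph x.2, by simp [x.1.2], isPartialMatching_injGraph x.2⟩

theorem injGraphSigma_injective (j : ℕ) : Function.Injective (injGraphSigma α β j) := by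
  rintro ⟨⟨s, hs⟩, f⟩ ⟨⟨t, ht⟩, g⟩ h
  have he : injGraph f = injGraph g := congrArg Subtype.val h
  classical
  obtain rfl : s = t := by
    simpa only [image_fst_injGraph] using congrArg (image Prod.fst) he
  obtain rfl : f = g := by
    ext a
    obtain ⟨b, hb⟩ := (mem_injGraph g).1 (he ▸ (mem_injGraph f).2 ⟨a, rfl⟩)
    obtain rfl : b = a := Subtype.ext (congrArg Prod.fst hb)
    exact congrArg Prod.snd hb.symm
  rfl

theorem injGraphSigma_surjective (j : ℕ) : Function.Surjective (injGraphSigma α β j) := by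
  classical
  rintro ⟨p, hcard, hp⟩
  obtain ⟨hfst, hsnd⟩ := isPartialMatching_iff.1 hp
  set s := p.image Prod.fst
  have hs : s.card = j := by rw [card_image_of_injOn hfst, hcard]
  have : ∀ a : s, ∃ b, ((a : α), b) ∈ p := by
    rintro ⟨a, ha⟩
    obtain ⟨x, hx, rfl⟩ := mem_image.1 ha
    exact ⟨x.2, hx⟩
  choose f hf using this
  have hf_inj : Function.Injective f := fun a b h =>
    Subtype.ext (congrArg Prod.fst (hsnd (hf a) (hf b) h))
  refine ⟨⟨⟨s, hs⟩, ⟨f, hf_inj⟩⟩, Subtype.ext (eq_of_subset_of_card_le ?_ ?_)⟩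
  · intro x hx
    obtain ⟨a, rfl⟩ := (mem_injGraph _).1 hx
    exact hf a
  · simp [injGraphSigma, hs, hcard]

variable (α β) in
theorem card_partialMatchings [Fintype α] [Fintype β] (j : ℕ) :
    Nat.card {p : Finset (α × β) // p.card = j ∧ p.IsPartialMatching} =
      (Fintype.card α).choose j * (Fintype.card β).choose j * j ! := by
  classical
  rw [← Nat.card_congr (Equiv.ofBijective _
      ⟨injGraphSigma_injective j, injGraphSigma_surjective j⟩),
    Nat.card_eq_fintype_card, Fintype.card_sigma]
  have hemb (s : {s : Finset α // s.card = j}) :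
      Fintype.card ((s : Finset α) ↪ β) = j ! * (Fintype.card β).choose j := by
    rw [Fintype.card_embedding_eq, Fintype.card_coe, s.2, descFactorial_eq_factorial_mul_choose]
  simp only [hemb, sum_const, card_univ, Fintype.card_finset_len, smul_eq_mul]
  ring

end Finset

theorem factorial_mul_sqrt_mul_sqrt_le_sqrt_factorial_add {j k m : ℕ}
    (hjk : j ≤ k) (hjm : j ≤ m) :
    (j ! : ℝ) * √((k - j)! : ℝ) * √((m - j)! : ℝ) ≤ √((k + m)! : ℝ) := by
  have hnat : j ! ^ 2 * (k - j)! * (m - j)! ≤ (k + m)! :=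
    calc j ! ^ 2 * (k - j)! * (m - j)! = (j ! * (k - j)!) * (j ! * (m - j)!) := by ring
      _ ≤ k ! * m ! := Nat.mul_le_mul
          (Nat.le_of_dvd (factorial_pos k) (factorial_mul_factorial_dvd_factorial hjk))
          (Nat.le_of_dvd (factorial_pos m) (factorial_mul_factorial_dvd_factorial hjm))
      _ ≤ (k + m)! :=
          Nat.le_of_dvd (factorial_pos _) (factorial_mul_factorial_dvd_factorial_add k m)
  rw [Real.le_sqrt (by positivity) (by positivity), mul_pow, mul_pow,
    Real.sq_sqrt (by positivity), Real.sq_sqrt (by positivity)]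
  exact_mod_cast hnat

theorem sum_range_choose_mul_choose_le_two_pow (k m : ℕ) :
    ∑ j ∈ range (min k m + 1), k.choose j * m.choose j ≤ 2 ^ (k + m) :=
  calc ∑ j ∈ range (min k m + 1), k.choose j * m.choose j
      ≤ ∑ j ∈ range (k + 1), k.choose j * 2 ^ m :=
        (sum_le_sum fun j _ => Nat.mul_le_mul_left _ (choose_le_two_pow m j)).trans
          (sum_le_sum_of_subset (range_subset_range.2 (by omega)))
    _ = 2 ^ (k + m) := by rw [← sum_mul, sum_range_choose, pow_add]

theorem sum_choose_mul_choose_mul_factorial_mul_sqrt_le (k m : ℕ) :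
    ∑ j ∈ range (min k m + 1),
        (k.choose j * m.choose j * j ! : ℝ) * √((k - j)! : ℝ) * √((m - j)! : ℝ)
      ≤ 2 ^ (k + m) * √((k + m)! : ℝ) :=
  calc _ ≤ ∑ j ∈ range (min k m + 1),
          (k.choose j * m.choose j : ℝ) * √((k + m)! : ℝ) := by
        refine sum_le_sum fun j hj => ?_
        have hj' := mem_range.1 hj
        calc (k.choose j * m.choose j * j ! : ℝ) * √((k - j)! : ℝ) * √((m - j)! : ℝ)
            = (k.choose j * m.choose j : ℝ) *
                ((j ! : ℝ) * √((k - j)! : ℝ) * √((m - j)! : ℝ)) := by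
              ring
          _ ≤ _ := by
              gcongr
              exact factorial_mul_sqrt_mul_sqrt_le_sqrt_factorial_add (by omega) (by omega)
    _ = ((∑ j ∈ range (min k m + 1), k.choose j * m.choose j : ℕ) : ℝ) *
          √((k + m)! : ℝ) := by
        push_cast
        rw [sum_mul]
    _ ≤ 2 ^ (k + m) * √((k + m)! : ℝ) := by
        gcongr
        exact_mod_cast sum_range_choose_mul_choose_le_two_pow k m

/-- For `0 ≤ k ≤ n`, the number of partial pairings between a set of `k` left
points and a set of `n-k` right points pairing exactly `j` left points with `j` right points
(i.e. sets of `j` pairs with pairwise distinct left members and pairwise distinct right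
members) equals `C(k,j) C(n-k,j) j!`, and the weighted sum
`∑_{j=0}^{min(k,n-k)} C(k,j) C(n-k,j) j! √((k-j)!) √((n-k-j)!)` is at most `2ⁿ √(n!)`. -/
theorem stmt9 (n k : ℕ) (hk : k ≤ n) :
    (∀ j : ℕ,
      Nat.card {p : Finset (Fin k × Fin (n - k)) //
          p.card = j ∧ ∀ a ∈ p, ∀ b ∈ p, a ≠ b → a.1 ≠ b.1 ∧ a.2 ≠ b.2}
        = Nat.choose k j * Nat.choose (n - k) j * Nat.factorial j) ∧
    (∑ j ∈ Finset.range (min k (n - k) + 1),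
        (Nat.choose k j * Nat.choose (n - k) j * Nat.factorial j : ℝ) *
          Real.sqrt (Nat.factorial (k - j)) * Real.sqrt (Nat.factorial (n - k - j)))
      ≤ 2 ^ n * Real.sqrt (Nat.factorial n) := by
  refine ⟨fun j => ?_, ?_⟩
  · have := card_partialMatchings (Fin k) (Fin (n - k)) j
    rwa [Fintype.card_fin, Fintype.card_fin] at this
  · simpa only [Nat.add_sub_cancel' hk] using
      sum_choose_mul_choose_mul_factorial_mul_sqrt_le k (n - k)
end
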